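/- Let T be a cubic tree with at least 4 nodes in which every edge is oriented. Then T has a sink that is an internal node; moreover, if each edge e is oriented from the component Y_e toward Z_e whenever 2|L(Y_e)| < |L(Z_e)|, and every edge is so oriented, then the three subtrees hanging off an internal sink node each contain fewer than |L(T)|/3 leaves, yielding a contradiction — hence not every edge satisfies 2|L(Y_e)| < |L(Z_e)| for one of its sides. -/

import Mathlib

/-!
In a tree the `c`-side of an edge `cz` is the set of vertices closer to `c` than to `z`. Hence the
sides of the edges at `z` partition the other vertices, and the vertex of a side farthest from the
edge is a leaf. The rule orients `ab` from `a` to `b` iff `3 |L(Y_e)| < |L(T)|`. Take an arrow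
`a → b` with the most leaves on its tail side: `b` is not a leaf, and an arrow `b → c` would have
strictly more leaves behind it (those behind `a` and at least one from the third branch at `b`), so
`b` is an internal sink. But the three sides at an internal sink partition the leaves, while each
holds fewer than a third of them.
-/
open Finset

namespace SimpleGraph

variable {V : Type*} {G : SimpleGraph V}

theorem Connected.exists_adj_dist_lt (hG : G.Connected) {x v : V} (h : x ≠ v) :
    ∃ w, G.Adj v w ∧ G.dist x w < G.dist x v := by
  obtain ⟨p, hp⟩ := hG.exists_walk_length_eq_dist v x
  cases p with
  | nil => exact absurd rfl h
  | cons hadj q =>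
    refine ⟨_, hadj, ?_⟩
    rw [dist_comm, G.dist_comm (u := x), ← hp, Walk.length_cons]
    exact Nat.lt_succ_of_le (G.dist_le q)

theorem Reachable.reachable_deleteEdges_of_dist_lt {x c z : V} {e : Sym2 V}
    (hxc : G.Reachable x c) (hz : z ∈ e) (h : G.dist x c < G.dist x z) :
    (G.deleteEdges {e}).Reachable x c := by
  classical
  obtain ⟨p, hp⟩ := hxc.exists_walk_length_eq_dist
  have hzp : z ∉ p.support := fun hz' => by
    have := G.dist_le (p.takeUntil z hz')
    have := p.length_takeUntil_le_length hz'
    omega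
  exact ⟨p.toDeleteEdges {e} fun e' he' he =>
    hzp (Walk.mem_support_of_mem_edges he' (Set.mem_singleton_iff.mp he ▸ hz))⟩

def side (G : SimpleGraph V) (a b : V) : Set V :=
  {v | (G.deleteEdges {s(a, b)}).Reachable v a}

namespace IsTree

variable (hT : G.IsTree)
include hT

theorem mem_side_iff {c z v : V} (h : G.Adj c z) :
    v ∈ G.side c z ↔ G.dist v c < G.dist v z := by
  refine ⟨fun hvc => ?_,
    (hT.connected v c).reachable_deleteEdges_of_dist_lt (Sym2.mem_mk_right c z)⟩
  refine (hT.dist_ne_of_adj v h).lt_or_gt.resolve_right fun hzc => ?_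
  have hvz := (hT.connected v z).reachable_deleteEdges_of_dist_lt (Sym2.mem_mk_left c z) hzc
  exact isBridge_iff.mp (isAcyclic_iff_forall_adj_isBridge.mp hT.isAcyclic h)
    (hvc.symm.trans hvz)

theorem eq_of_adj_of_dist_lt {x v c d : V} (hc : G.Adj v c) (hd : G.Adj v d)
    (hxc : G.dist x c < G.dist x v) (hxd : G.dist x d < G.dist x v) : c = d := by
  by_contra hcd
  have hxd' := (hT.connected x d).reachable_deleteEdges_of_dist_lt (Sym2.mem_mk_right c v) hxd
  have hdv : (G.deleteEdges {s(c, v)}).Adj d v := by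
    simp [hd.symm, Ne.symm hcd, hd.ne']
  have hxv : x ∈ G.side v c := by
    rw [side, Set.mem_ofPred_eq, Sym2.eq_swap]
    exact hxd'.trans hdv.reachable
  exact ((hT.mem_side_iff hc).mp hxv).not_gt hxc

theorem compl_side {a b : V} (h : G.Adj a b) : (G.side a b)ᶜ = G.side b a := by
  ext v
  rw [Set.mem_compl_iff, hT.mem_side_iff h, hT.mem_side_iff h.symm, not_lt]
  exact ⟨fun hle => hle.lt_of_ne (hT.dist_ne_of_adj v h).symm, le_of_lt⟩

theorem ncard_inter_side_add_ncard_inter_side [Finite V] {a b : V} (h : G.Adj a b)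
    (S : Set V) :
    (S ∩ G.side a b).ncard + (S ∩ G.side b a).ncard = S.ncard := by
  rw [← hT.compl_side h, ← Set.sdiff_eq]
  exact Set.ncard_inter_add_ncard_sdiff_eq_ncard S _ S.toFinite

theorem sum_ncard_inter_side [Fintype V] [DecidableRel G.Adj] (z : V) (S : Set V) :
    ∑ c ∈ G.neighborFinset z, (S ∩ G.side c z).ncard = (S \ {z}).ncard := by
  have hdisj : (↑(G.neighborFinset z) : Set V).PairwiseDisjoint (fun c => S ∩ G.side c z) := by
    intro c hc d hd hcd
    rw [Function.onFun, Set.disjoint_left]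
    rintro v ⟨-, hvc⟩ ⟨-, hvd⟩
    rw [coe_neighborFinset] at hc hd
    exact hcd (hT.eq_of_adj_of_dist_lt hc hd ((hT.mem_side_iff (G.adj_symm hc)).mp hvc)
      ((hT.mem_side_iff (G.adj_symm hd)).mp hvd))
  have hunion : ⋃ c ∈ (↑(G.neighborFinset z) : Set V), S ∩ G.side c z = S \ {z} := by
    ext v
    simp only [coe_neighborFinset, Set.mem_iUnion, Set.mem_inter_iff, Set.mem_sdiff,
      Set.mem_singleton_iff, mem_neighborSet, exists_prop]
    constructor
    · rintro ⟨c, hzc, hvS, hvc⟩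
      refine ⟨hvS, ?_⟩
      rintro rfl
      exact (hT.mem_side_iff hzc.symm).mp hvc |>.not_ge (by simp)
    · rintro ⟨hvS, hvz⟩
      obtain ⟨c, hzc, hvc⟩ := hT.connected.exists_adj_dist_lt hvz
      exact ⟨c, hzc, hvS, (hT.mem_side_iff hzc.symm).mpr hvc⟩
  rw [← finsum_mem_coe_finset, ← Set.Finite.ncard_biUnion (Set.toFinite _)
    (fun _ _ => Set.toFinite _) hdisj, hunion]

theorem exists_degree_eq_one_mem_side [Fintype V] [DecidableRel G.Adj] {a b : V}
    (h : G.Adj a b) : ∃ v ∈ G.side a b, G.degree v = 1 := by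
  obtain ⟨v, hv, hmax⟩ := (G.side a b).exists_max_image (G.dist b) (Set.toFinite _)
    ⟨a, Reachable.refl a⟩
  have hvb : b ≠ v := by
    rintro rfl
    exact ((hT.mem_side_iff h).mp hv).not_ge (by simp)
  obtain ⟨w, hvw, hw⟩ := hT.connected.exists_adj_dist_lt hvb
  refine ⟨v, hv, ?_⟩
  rw [← card_neighborFinset_eq_degree, card_eq_one]
  refine ⟨w, Finset.ext fun u => ⟨fun hu => ?_, fun hu => ?_⟩⟩
  · rw [mem_neighborFinset] at hu
    refine mem_singleton.mpr (hT.eq_of_adj_of_dist_lt hu hvw ?_ hw)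
    refine (hT.dist_eq_dist_add_one_of_adj b hu).elim (fun hbv => by omega) fun hbu => ?_
    have hub : b ≠ u := by
      rintro rfl
      simp at hbu
    have huv : (G.deleteEdges {s(a, b)}).Adj u v := by
      refine (deleteEdges_adj ..).mpr ⟨hu.symm, fun he => ?_⟩
      have hb : b ∈ s(u, v) := (Set.mem_singleton_iff.mp he) ▸ Sym2.mem_mk_right a b
      rcases Sym2.mem_iff.mp hb with hb | hb
      exacts [hub hb, hvb hb]
    have := hmax u (huv.reachable.trans hv)
    omega
  · rw [mem_singleton.mp hu, mem_neighborFinset]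
    exact hvw

end IsTree

variable [Fintype V] [DecidableRel G.Adj]

/-- The number of leaves on the `a`-side of the edge `ab`, the paper's `|L(Y_e)|` for `e = ab`. -/
noncomputable def leafCount (G : SimpleGraph V) [DecidableRel G.Adj] (a b : V) : ℕ :=
  ({v | G.degree v = 1} ∩ G.side a b).ncard

namespace IsTree

variable (hT : G.IsTree)
include hT

theorem leafCount_add_leafCount {a b : V} (h : G.Adj a b) :
    G.leafCount a b + G.leafCount b a = {v | G.degree v = 1}.ncard :=
  hT.ncard_inter_side_add_ncard_inter_side h _

theorem one_le_leafCount {a b : V} (h : G.Adj a b) : 1 ≤ G.leafCount a b := by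
  obtain ⟨v, hv, hdeg⟩ := hT.exists_degree_eq_one_mem_side h
  exact (Set.ncard_pos (Set.toFinite _)).mpr ⟨v, hdeg, hv⟩

theorem sum_leafCount_of_degree_ne_one {z : V} (hz : G.degree z ≠ 1) :
    ∑ c ∈ G.neighborFinset z, G.leafCount c z = {v | G.degree v = 1}.ncard := by
  simp only [leafCount]
  rw [hT.sum_ncard_inter_side, Set.sdiff_singleton_eq_self (s := {v | G.degree v = 1}) hz]

theorem leafCount_eq_one_of_degree_eq_one {a b : V} (h : G.Adj a b) (hb : G.degree b = 1) :
    G.leafCount b a = 1 := by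
  have hnbr : G.neighborFinset b = {a} := by
    obtain ⟨c, hc⟩ := card_eq_one.mp ((G.card_neighborFinset_eq_degree b).trans hb)
    have ha : a ∈ G.neighborFinset b := (G.mem_neighborFinset b a).mpr h.symm
    rw [hc, mem_singleton] at ha
    rw [hc, ha]
  have hsum := hT.sum_ncard_inter_side b {v | G.degree v = 1}
  rw [hnbr, sum_singleton, Set.ncard_sdiff_singleton_of_mem (s := {v | G.degree v = 1}) hb] at hsum
  have := hT.leafCount_add_leafCount h
  have := hT.one_le_leafCount h
  unfold leafCount at *
  omega

theorem leafCount_lt_leafCount {a z c : V} (hz : 3 ≤ G.degree z) (ha : G.Adj a z)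
    (hc : G.Adj z c) (hac : a ≠ c) : G.leafCount a z < G.leafCount z c := by
  classical
  have hcN : c ∈ G.neighborFinset z := (G.mem_neighborFinset z c).mpr hc
  have haN : a ∈ (G.neighborFinset z).erase c :=
    mem_erase.mpr ⟨hac, (G.mem_neighborFinset z a).mpr ha.symm⟩
  obtain ⟨d, hd⟩ : (((G.neighborFinset z).erase c).erase a).Nonempty := by
    rw [← card_pos, card_erase_of_mem haN, card_erase_of_mem hcN, card_neighborFinset_eq_degree]
    omega
  have hsum := hT.sum_leafCount_of_degree_ne_one (by omega : G.degree z ≠ 1)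
  rw [← add_sum_erase _ _ hcN, ← add_sum_erase _ _ haN] at hsum
  have hdN : G.Adj d z :=
    ((G.mem_neighborFinset z d).mp (mem_of_mem_erase (mem_of_mem_erase hd))).symm
  have := single_le_sum (f := (G.leafCount · z)) (fun _ _ => Nat.zero_le _) hd
  have := hT.one_le_leafCount hdN
  have := hT.leafCount_add_leafCount hc.symm
  omega

end IsTree

/-- `A` orients every edge `ab` of `G`, from `a` to `b` exactly when `2 |L(Y_e)| < |L(Z_e)|`. -/
structure IsLeafCountOrientation (G : SimpleGraph V) [DecidableRel G.Adj] (A : V → V → Prop) :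
    Prop where
  adj : ∀ a b, A a b → G.Adj a b
  iff : ∀ a b, G.Adj a b → (A a b ↔ 2 * G.leafCount a b < G.leafCount b a)
  total : ∀ a b, G.Adj a b → A a b ∨ A b a

namespace IsLeafCountOrientation

variable {A : V → V → Prop} (hA : G.IsLeafCountOrientation A) (hT : G.IsTree)
include hA hT

theorem iff_three_mul_lt {a b : V} (h : G.Adj a b) :
    A a b ↔ 3 * G.leafCount a b < {v | G.degree v = 1}.ncard := by
  have := hT.leafCount_add_leafCount h
  rw [hA.iff a b h]
  omega

theorem exists_sink_degree_ne_one (hcubic : ∀ v, G.degree v ≠ 1 → 3 ≤ G.degree v)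
    {a₀ b₀ : V} (h₀ : G.Adj a₀ b₀) : ∃ s, (∀ b, ¬ A s b) ∧ G.degree s ≠ 1 := by
  classical
  have hne : (univ.filter fun p : V × V => A p.1 p.2).Nonempty := by
    rcases hA.total a₀ b₀ h₀ with h | h
    exacts [⟨(a₀, b₀), by simpa using h⟩, ⟨(b₀, a₀), by simpa using h⟩]
  obtain ⟨⟨a, b⟩, hab, hmax⟩ := exists_max_image _ (fun p => G.leafCount p.1 p.2) hne
  simp only [mem_filter, mem_univ, true_and, Prod.forall] at hab hmax
  have hab' := hA.adj a b hab
  have hb : G.degree b ≠ 1 := fun hb => by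
    have := hT.leafCount_eq_one_of_degree_eq_one hab' hb
    have := (hA.iff a b hab').mp hab
    have := hT.one_le_leafCount hab'
    omega
  refine ⟨b, fun c hbc => ?_, hb⟩
  have hbc' := hA.adj b c hbc
  have hac : a ≠ c := by
    rintro rfl
    have := (hA.iff_three_mul_lt hT hab').mp hab
    have := (hA.iff_three_mul_lt hT hbc').mp hbc
    have := hT.leafCount_add_leafCount hab'
    omega
  exact (hT.leafCount_lt_leafCount (hcubic b hb) hab' hbc' hac).not_ge (hmax b c hbc)

theorem exists_of_degree_eq_three {s : V} (hs : G.degree s = 3) : ∃ b, A s b := by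
  by_contra! hsink
  have hin : ∀ c ∈ G.neighborFinset s, 3 * G.leafCount c s < {v | G.degree v = 1}.ncard := by
    intro c hc
    have hcs := ((G.mem_neighborFinset s c).mp hc).symm
    exact (hA.iff_three_mul_lt hT hcs).mp ((hA.total c s hcs).resolve_right (hsink c))
  have hne : (G.neighborFinset s).Nonempty := by
    rw [← card_pos, card_neighborFinset_eq_degree, hs]
    omega
  have hlt := sum_lt_sum_of_nonempty hne hin
  rw [← mul_sum, hT.sum_leafCount_of_degree_ne_one (by omega), sum_const,
    card_neighborFinset_eq_degree, hs, smul_eq_mul] at hlt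
  exact lt_irrefl _ hlt

end IsLeafCountOrientation

end SimpleGraph

open SimpleGraph in
theorem stmt12_general {N : Type*} [Fintype N]
    (T : SimpleGraph N) [DecidableRel T.Adj]
    (hT : T.IsTree) (hN : 4 ≤ Fintype.card N)
    (hcubic : ∀ v : N, T.degree v ≠ 1 → T.degree v = 3)
    (leafSide : N → N → ℕ)
    (hleafSide : ∀ a b : N, leafSide a b =
      ({v : N | T.degree v = 1} ∩
        {v : N | (T.deleteEdges {s(a, b)}).Reachable v a}).ncard) :
    -- (1) any complete orientation following the rule has a sink that is internal
    (∀ A : N → N → Prop,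
      (∀ a b : N, A a b → T.Adj a b) →
      (∀ a b : N, T.Adj a b → (A a b ↔ 2 * leafSide a b < leafSide b a)) →
      (∀ a b : N, T.Adj a b → (A a b ∨ A b a)) →
      ∃ s : N, (∀ b : N, ¬ A s b) ∧ T.degree s ≠ 1) ∧
    -- (2) ... and in fact such a complete orientation cannot exist
    (∀ A : N → N → Prop,
      (∀ a b : N, A a b → T.Adj a b) →
      (∀ a b : N, T.Adj a b → (A a b ↔ 2 * leafSide a b < leafSide b a)) →
      (∀ a b : N, T.Adj a b → (A a b ∨ A b a)) →
      False) ∧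
    -- (3) hence some edge fails the strict inequality on both sides
    (∃ a b : N, T.Adj a b ∧
      ¬ 2 * leafSide a b < leafSide b a ∧ ¬ 2 * leafSide b a < leafSide a b) := by
  obtain rfl : leafSide = T.leafCount := funext₂ hleafSide
  obtain ⟨u, v, huv⟩ := Fintype.exists_pair_of_one_lt_card (by omega : 1 < Fintype.card N)
  obtain ⟨w, hvw, -⟩ := hT.connected.exists_adj_dist_lt huv
  have hsink (A : N → N → Prop) (hA : T.IsLeafCountOrientation A) :
      ∃ s, (∀ b, ¬ A s b) ∧ T.degree s ≠ 1 :=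
    hA.exists_sink_degree_ne_one hT (fun v hv => (hcubic v hv).ge) hvw
  have hnone (A : N → N → Prop) (hA : T.IsLeafCountOrientation A) : False := by
    obtain ⟨s, hs, hdeg⟩ := hsink A hA
    obtain ⟨b, hb⟩ := hA.exists_of_degree_eq_three hT (hcubic s hdeg)
    exact hs b hb
  refine ⟨fun A h1 h2 h3 => hsink A ⟨h1, h2, h3⟩,
    fun A h1 h2 h3 => hnone A ⟨h1, h2, h3⟩, ?_⟩
  by_contra! h
  refine hnone (fun a b => T.Adj a b ∧ 2 * T.leafCount a b < T.leafCount b a)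
    ⟨fun _ _ hab => hab.1, fun _ _ hab => and_iff_right hab, fun a b hab => ?_⟩
  by_cases hab' : 2 * T.leafCount a b < T.leafCount b a
  · exact .inl ⟨hab, hab'⟩
  · exact .inr ⟨hab.symm, h a b hab (not_lt.mp hab')⟩

/-- Let `T` be a cubic tree with at least 4 nodes in which every edge is
oriented.  If each edge `ab` is oriented from the side `Y_e` of `a` toward the
side `Z_e` of `b` exactly when `2|L(Y_e)| < |L(Z_e)|`, and every edge is so
oriented, then `T` has a sink which is an internal node, and moreover this
situation yields a contradiction — hence some edge of `T` fails
`2|L(Y_e)| < |L(Z_e)|` for both of its sides. -/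
theorem stmt12 {N : Type*} [Fintype N] [DecidableEq N]
    (T : SimpleGraph N) [DecidableRel T.Adj]
    (hT : T.IsTree) (hN : 4 ≤ Fintype.card N)
    (hcubic : ∀ v : N, T.degree v ≠ 1 → T.degree v = 3)
    (leafSide : N → N → ℕ)
    (hleafSide : ∀ a b : N, leafSide a b =
      ({v : N | T.degree v = 1} ∩
        {v : N | (T.deleteEdges {s(a, b)}).Reachable v a}).ncard) :
    -- (1) any complete orientation following the rule has a sink that is internal
    (∀ A : N → N → Prop,
      (∀ a b : N, A a b → T.Adj a b) →
      (∀ a b : N, T.Adj a b → (A a b ↔ 2 * leafSide a b < leafSide b a)) →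
      (∀ a b : N, T.Adj a b → (A a b ∨ A b a)) →
      ∃ s : N, (∀ b : N, ¬ A s b) ∧ T.degree s ≠ 1) ∧
    -- (2) ... and in fact such a complete orientation cannot exist
    (∀ A : N → N → Prop,
      (∀ a b : N, A a b → T.Adj a b) →
      (∀ a b : N, T.Adj a b → (A a b ↔ 2 * leafSide a b < leafSide b a)) →
      (∀ a b : N, T.Adj a b → (A a b ∨ A b a)) →
      False) ∧
    -- (3) hence some edge fails the strict inequality on both sides
    (∃ a b : N, T.Adj a b ∧
      ¬ 2 * leafSide a b < leafSide b a ∧ ¬ 2 * leafSide b a < leafSide a b) :=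
  stmt12_general T hT hN hcubic leafSide hleafSide
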